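/- arXiv:1308.3190 — 2 statements merged into one kernel-verified Lean document; each statement's English description precedes it below -/
import Mathlib

section
/- Let g be an element of a finite symplectic group and R a symplectic reflection in it. If there exist c¹, c² in Ker(g - κ) whose projections to V_R = Im(R-1) have nonzero symplectic pairing, then Ker(Rg - κ) = Ker(R - 1) ∩ Ker(g - κ), and dim Ker(Rg - κ) = dim Ker(g - κ) - 2. -/
/-!
Put `W = Im(R - 1)`, `Z = Ker(R - 1)` and `ψ x = (ω(x, v¹), ω(x, v²))`, where `vⁱ` is the
`W`-component of `cⁱ`. Since `R` is an isometry, `W ⊥ Z`, so `ψ` kills `Z` and `ψ cⁱ = ψ vⁱ`.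
As `ω(v¹, v²) ≠ 0`, `ψ` maps onto the plane every subspace containing vectors with the same
`ψ`-values as `v¹, v²`; hence `ψ` is injective on the plane `W`, and comparing dimensions gives
`Ker ψ = Z`.
If `R g x = κ x`, then `w = (g - κ) x = -(R - 1)(g x)` lies in `W`, and `w ⊥ Ker(g - κ)` because
`g` is an isometry and `κ² = 1`; with `W ⊥ Z` this gives `ψ w = 0`, so `w = 0` and then `R x = x`.
Finally `ψ` maps `Ker(g - κ)` onto the plane with kernel `Z ∩ Ker(g - κ)`.
-/

open Module LinearMap

theorem Submodule.eq_top_of_mem_prod {𝕜 : Type*} [Field 𝕜] {S : Submodule 𝕜 (𝕜 × 𝕜)}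
    {a b : 𝕜} (ha : a ≠ 0) (hb : b ≠ 0) (h₁ : (a, 0) ∈ S) (h₂ : (0, b) ∈ S) : S = ⊤ := by
  refine eq_top_iff'.2 fun p => ?_
  have hp : p = (p.1 / a) • (a, (0 : 𝕜)) + (p.2 / b) • ((0 : 𝕜), b) := by
    ext <;> simp [ha, hb]
  rw [hp]
  exact add_mem (smul_mem _ _ h₁) (smul_mem _ _ h₂)

namespace LinearMap.BilinForm

theorem apply_sub_smul_one_apply_eq_zero {R V : Type*} [CommRing R] [AddCommGroup V]
    [Module R V] {ω : LinearMap.BilinForm R V} {f : Module.End R V} (hf : ω.IsOrthogonal f) {κ : R}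
    (hκ : κ * κ = 1) {c : V} (hc : c ∈ ker (f - κ • 1)) (x : V) :
    ω ((f - κ • 1) x) c = 0 := by
  have hfc : f c = κ • c := by simpa [sub_eq_zero] using hc
  have hfx : ω (f x) c = κ * ω x c := by
    calc ω (f x) c = κ * (κ * ω (f x) c) := by rw [← mul_assoc, hκ, one_mul]
      _ = κ * ω (f x) (f c) := by rw [hfc, map_smul, smul_eq_mul]
      _ = κ * ω x c := by rw [hf]
  simp [hfx]

variable {𝕜 V : Type*} [Field 𝕜] [AddCommGroup V] [Module 𝕜 V] {ω : LinearMap.BilinForm 𝕜 V}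

variable (ω) in
def pairWith (v₁ v₂ : V) : V →ₗ[𝕜] 𝕜 × 𝕜 :=
  (ω.flip v₁).prod (ω.flip v₂)

@[simp]
theorem pairWith_apply (v₁ v₂ x : V) : ω.pairWith v₁ v₂ x = (ω x v₁, ω x v₂) :=
  rfl

section PairWith

variable (hω : ω.IsAlt) {v₁ v₂ : V} (h₁₂ : ω v₁ v₂ ≠ 0)
include hω h₁₂

theorem map_pairWith_eq_top {P : Submodule 𝕜 V} {u₁ u₂ : V} (hu₁ : u₁ ∈ P) (hu₂ : u₂ ∈ P)
    (h₁ : ω.pairWith v₁ v₂ u₁ = ω.pairWith v₁ v₂ v₁)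
    (h₂ : ω.pairWith v₁ v₂ u₂ = ω.pairWith v₁ v₂ v₂) :
    P.map (ω.pairWith v₁ v₂) = ⊤ := by
  refine Submodule.eq_top_of_mem_prod (hω.eq_iff.not.1 h₁₂) h₁₂ ?_ ?_
  · exact ⟨u₂, hu₂, by simp_all [hω.self_eq_zero]⟩
  · exact ⟨u₁, hu₁, by simp_all [hω.self_eq_zero]⟩

theorem finrank_inf_ker_pairWith_add_two [FiniteDimensional 𝕜 V] {P : Submodule 𝕜 V}
    {u₁ u₂ : V} (hu₁ : u₁ ∈ P) (hu₂ : u₂ ∈ P)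
    (h₁ : ω.pairWith v₁ v₂ u₁ = ω.pairWith v₁ v₂ v₁)
    (h₂ : ω.pairWith v₁ v₂ u₂ = ω.pairWith v₁ v₂ v₂) :
    finrank 𝕜 (P ⊓ ker (ω.pairWith v₁ v₂) : Submodule 𝕜 V) + 2 = finrank 𝕜 P := by
  have hrange : range ((ω.pairWith v₁ v₂).domRestrict P) = ⊤ := by
    rw [range_domRestrict, map_pairWith_eq_top hω h₁₂ hu₁ hu₂ h₁ h₂]
  have hker : finrank 𝕜 (ker ((ω.pairWith v₁ v₂).domRestrict P))
      = finrank 𝕜 (P ⊓ ker (ω.pairWith v₁ v₂) : Submodule 𝕜 V) := by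
    rw [ker_domRestrict, ← Submodule.map_comap_subtype, Submodule.finrank_map_subtype_eq]
  have := finrank_range_add_finrank_ker ((ω.pairWith v₁ v₂).domRestrict P)
  rw [hrange, finrank_top, hker] at this
  simp only [finrank_prod, finrank_self] at this
  omega

theorem inf_ker_pairWith_eq_bot [FiniteDimensional 𝕜 V] {W : Submodule 𝕜 V}
    (hW : finrank 𝕜 W = 2) (hv₁ : v₁ ∈ W) (hv₂ : v₂ ∈ W) :
    W ⊓ ker (ω.pairWith v₁ v₂) = ⊥ := by
  have := finrank_inf_ker_pairWith_add_two hω h₁₂ hv₁ hv₂ rfl rfl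
  exact Submodule.finrank_eq_zero.1 (by omega)

end PairWith

section Reflection

variable {R : Module.End 𝕜 V} (hR : ω.IsOrthogonal R)
include hR

theorem apply_eq_zero_of_mem_range_sub_one_of_mem_ker_sub_one {w z : V}
    (hw : w ∈ range (R - 1)) (hz : z ∈ ker (R - 1)) : ω w z = 0 := by
  obtain ⟨y, rfl⟩ := hw
  simpa using apply_sub_smul_one_apply_eq_zero hR (one_mul 1) (by simpa using hz) y

variable [FiniteDimensional 𝕜 V] (hω : ω.IsAlt) (hrank : finrank 𝕜 (range (R - 1)) = 2)
  {v₁ v₂ : V} (hv₁ : v₁ ∈ range (R - 1)) (hv₂ : v₂ ∈ range (R - 1)) (h₁₂ : ω v₁ v₂ ≠ 0)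
include hω hrank hv₁ hv₂ h₁₂

theorem ker_pairWith_eq_ker_sub_one : ker (ω.pairWith v₁ v₂) = ker (R - 1) := by
  have hle : ker (R - 1) ≤ ker (ω.pairWith v₁ v₂) := fun z hz => by
    simp [hω.eq_iff.1 (apply_eq_zero_of_mem_range_sub_one_of_mem_ker_sub_one hR hv₁ hz),
      hω.eq_iff.1 (apply_eq_zero_of_mem_range_sub_one_of_mem_ker_sub_one hR hv₂ hz)]
  have hψ := finrank_inf_ker_pairWith_add_two hω h₁₂ (Submodule.mem_top (x := v₁))
    (Submodule.mem_top (x := v₂)) rfl rfl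
  have hR1 := finrank_range_add_finrank_ker (R - 1)
  rw [top_inf_eq, finrank_top] at hψ
  exact (Submodule.eq_of_le_of_finrank_eq hle (by omega)).symm

variable {g : Module.End 𝕜 V} (hg : ω.IsOrthogonal g) {κ : 𝕜} (hκ : κ * κ = 1) {z₁ z₂ : V}
  (hz₁ : z₁ ∈ ker (R - 1)) (hz₂ : z₂ ∈ ker (R - 1))
  (hc₁ : v₁ + z₁ ∈ ker (g - κ • 1)) (hc₂ : v₂ + z₂ ∈ ker (g - κ • 1))
include hg hκ hz₁ hz₂ hc₁ hc₂

theorem ker_mul_sub_smul_one_eq :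
    ker (R * g - κ • 1) = ker (R - 1) ⊓ ker (g - κ • 1) := by
  have hκ0 : κ ≠ 0 := left_ne_zero_of_mul_eq_one hκ
  ext x
  simp only [Submodule.mem_inf, mem_ker, LinearMap.sub_apply, LinearMap.smul_apply,
    Module.End.one_apply, Module.End.mul_apply, sub_eq_zero]
  constructor
  · intro hx
    set w := (g - κ • 1) x with hw
    have hwW : w ∈ range (R - 1) := ⟨-g x, by simp [hw, hx, neg_add_eq_sub]⟩
    have hw_ortho {v z : V} (hz : z ∈ ker (R - 1)) (hc : v + z ∈ ker (g - κ • 1)) :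
        ω w v = 0 := by
      have := apply_sub_smul_one_apply_eq_zero hg hκ hc x
      rwa [map_add, apply_eq_zero_of_mem_range_sub_one_of_mem_ker_sub_one hR hwW hz,
        add_zero] at this
    have hw0 : w = 0 := by
      have hmem : w ∈ range (R - 1) ⊓ ker (ω.pairWith v₁ v₂) :=
        ⟨hwW, by simp [hw_ortho hz₁ hc₁, hw_ortho hz₂ hc₂]⟩
      rwa [inf_ker_pairWith_eq_bot hω h₁₂ hrank hv₁ hv₂] at hmem
    have hgx : g x = κ • x := by simpa [hw, sub_eq_zero] using hw0
    refine ⟨smul_right_injective V hκ0 ?_, hgx⟩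
    simpa [hgx] using hx
  · rintro ⟨hRx, hgx⟩
    rw [hgx, map_smul, hRx]

theorem finrank_ker_mul_sub_smul_one :
    finrank 𝕜 (ker (R * g - κ • 1)) = finrank 𝕜 (ker (g - κ • 1)) - 2 := by
  have hψz {z : V} (hz : z ∈ ker (R - 1)) (v : V) :
      ω.pairWith v₁ v₂ (v + z) = ω.pairWith v₁ v₂ v := by
    rw [← ker_pairWith_eq_ker_sub_one hR hω hrank hv₁ hv₂ h₁₂] at hz
    rw [map_add, hz, add_zero]
  have := finrank_inf_ker_pairWith_add_two hω h₁₂ hc₁ hc₂ (hψz hz₁ v₁) (hψz hz₂ v₂)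
  rw [ker_mul_sub_smul_one_eq hR hω hrank hv₁ hv₂ h₁₂ hg hκ hz₁ hz₂ hc₁ hc₂, inf_comm,
    ← ker_pairWith_eq_ker_sub_one hR hω hrank hv₁ hv₂ h₁₂]
  omega

end Reflection

end LinearMap.BilinForm

theorem symplectic_reflection_key_lemma_general
    (V : Type*) [AddCommGroup V] [Module ℂ V] [FiniteDimensional ℂ V]
    (ω : LinearMap.BilinForm ℂ V) (halt : ω.IsAlt)
    (κ : ℂ) (hκ : κ = 1 ∨ κ = -1)
    (G : Subgroup (V ≃ₗ[ℂ] V))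
    (hG : ∀ h ∈ G, ∀ x y, ω (h x) (h y) = ω x y)
    (g R : V ≃ₗ[ℂ] V) (hgG : g ∈ G) (hRG : R ∈ G)
    (fg fR : Module.End ℂ V)
    (hfg : fg = (g : V →ₗ[ℂ] V)) (hfR : fR = (R : V →ₗ[ℂ] V))
    (hrank : Module.finrank ℂ (LinearMap.range (fR - 1)) = 2)
    -- there exist `c¹, c²` in `Ker(g - κ)`, with decompositions `cⁱ = vⁱ + zⁱ`,
    -- `vⁱ ∈ V_R`, `zⁱ ∈ Z_R`, such that `ω_R(c¹, c²) = ω(v¹, v²) ≠ 0`: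
    (hc : ∃ c₁ c₂ v₁ v₂ z₁ z₂ : V,
      c₁ ∈ LinearMap.ker (fg - κ • 1) ∧ c₂ ∈ LinearMap.ker (fg - κ • 1) ∧
      v₁ ∈ LinearMap.range (fR - 1) ∧ v₂ ∈ LinearMap.range (fR - 1) ∧
      z₁ ∈ LinearMap.ker (fR - 1) ∧ z₂ ∈ LinearMap.ker (fR - 1) ∧
      c₁ = v₁ + z₁ ∧ c₂ = v₂ + z₂ ∧ ω v₁ v₂ ≠ 0) :
    LinearMap.ker (fR * fg - κ • 1)
        = LinearMap.ker (fR - 1) ⊓ LinearMap.ker (fg - κ • 1) ∧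
    Module.finrank ℂ (LinearMap.ker (fR * fg - κ • 1))
        = Module.finrank ℂ (LinearMap.ker (fg - κ • 1)) - 2 := by
  obtain ⟨_, _, v₁, v₂, z₁, z₂, hc₁, hc₂, hv₁, hv₂, hz₁, hz₂, rfl, rfl, h₁₂⟩ := hc
  have hκ2 : κ * κ = 1 := by rcases hκ with rfl | rfl <;> norm_num
  have hg : ω.IsOrthogonal fg := hfg ▸ hG g hgG
  have hR : ω.IsOrthogonal fR := hfR ▸ hG R hRG
  exact ⟨BilinForm.ker_mul_sub_smul_one_eq hR halt hrank hv₁ hv₂ h₁₂ hg hκ2 hz₁ hz₂ hc₁ hc₂,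
    BilinForm.finrank_ker_mul_sub_smul_one hR halt hrank hv₁ hv₂ h₁₂ hg hκ2 hz₁ hz₂ hc₁ hc₂⟩

/-- The key lemma. Let `κ = ±1`, `ω` a nondegenerate alternating form on `V = ℂ^{2N}`,
`G` a finite subgroup of `Sp(V, ω)`, `g, R ∈ G` with `rank(R - 1) = 2`.  If there exist
`c¹, c² ∈ Ker(g - κ)` whose `V_R = Im(R-1)` components have nonzero symplectic pairing,
then `Ker(Rg - κ) = Ker(R - 1) ∩ Ker(g - κ)` and
`dim Ker(Rg - κ) = dim Ker(g - κ) - 2`. -/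
theorem symplectic_reflection_key_lemma
    (N : ℕ) (V : Type*) [AddCommGroup V] [Module ℂ V] [FiniteDimensional ℂ V]
    (hdim : Module.finrank ℂ V = 2 * N)
    (ω : LinearMap.BilinForm ℂ V) (halt : ω.IsAlt) (hnd : ω.Nondegenerate)
    (κ : ℂ) (hκ : κ = 1 ∨ κ = -1)
    (G : Subgroup (V ≃ₗ[ℂ] V)) [Finite G]
    (hG : ∀ h ∈ G, ∀ x y, ω (h x) (h y) = ω x y)
    (g R : V ≃ₗ[ℂ] V) (hgG : g ∈ G) (hRG : R ∈ G)
    (fg fR : Module.End ℂ V)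
    (hfg : fg = (g : V →ₗ[ℂ] V)) (hfR : fR = (R : V →ₗ[ℂ] V))
    (hrank : Module.finrank ℂ (LinearMap.range (fR - 1)) = 2)
    -- there exist `c¹, c²` in `Ker(g - κ)`, with decompositions `cⁱ = vⁱ + zⁱ`,
    -- `vⁱ ∈ V_R`, `zⁱ ∈ Z_R`, such that `ω_R(c¹, c²) = ω(v¹, v²) ≠ 0`:
    (hc : ∃ c₁ c₂ v₁ v₂ z₁ z₂ : V,
      c₁ ∈ LinearMap.ker (fg - κ • 1) ∧ c₂ ∈ LinearMap.ker (fg - κ • 1) ∧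
      v₁ ∈ LinearMap.range (fR - 1) ∧ v₂ ∈ LinearMap.range (fR - 1) ∧
      z₁ ∈ LinearMap.ker (fR - 1) ∧ z₂ ∈ LinearMap.ker (fR - 1) ∧
      c₁ = v₁ + z₁ ∧ c₂ = v₂ + z₂ ∧ ω v₁ v₂ ≠ 0) :
    LinearMap.ker (fR * fg - κ • 1)
        = LinearMap.ker (fR - 1) ⊓ LinearMap.ker (fg - κ • 1) ∧
    Module.finrank ℂ (LinearMap.ker (fR * fg - κ • 1))
        = Module.finrank ℂ (LinearMap.ker (fg - κ • 1)) - 2 :=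
  symplectic_reflection_key_lemma_general V ω halt κ hκ G hG g R hgG hRG fg fR hfg hfR hrank hc
end

section
/- If there exists an element K in an associative superalgebra A with K² = 1, K even, and Kf = (-1)^{π(f)} f K for all homogeneous f (a Klein operator), then the map tr ↦ str with str(f) = tr(Kf) is a linear isomorphism between the space of even traces and the space of even supertraces on A. -/
section Klein

variable {A : Type*} [Ring A] [Algebra ℂ A] (A₀ A₁ : Submodule ℂ A)

/-- `T` is an even trace on the superalgebra `A = A₀ ⊕ A₁`: it vanishes on odd elements
and satisfies `T(fg) = T(gf)` on homogeneous elements. -/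
def IsEvenTrace (T : A →ₗ[ℂ] ℂ) : Prop :=
  (∀ x ∈ A₁, T x = 0) ∧
  (∀ f ∈ A₀, ∀ g ∈ A₀, T (f * g) = T (g * f)) ∧
  (∀ f ∈ A₀, ∀ g ∈ A₁, T (f * g) = T (g * f)) ∧
  (∀ f ∈ A₁, ∀ g ∈ A₀, T (f * g) = T (g * f)) ∧
  (∀ f ∈ A₁, ∀ g ∈ A₁, T (f * g) = T (g * f))

/-- `T` is an even supertrace on the superalgebra `A = A₀ ⊕ A₁`: it vanishes on odd
elements and satisfies `T(fg) = (-1)^{π(f)π(g)} T(gf)` on homogeneous elements. -/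
def IsEvenSupertrace (T : A →ₗ[ℂ] ℂ) : Prop :=
  (∀ x ∈ A₁, T x = 0) ∧
  (∀ f ∈ A₀, ∀ g ∈ A₀, T (f * g) = T (g * f)) ∧
  (∀ f ∈ A₀, ∀ g ∈ A₁, T (f * g) = T (g * f)) ∧
  (∀ f ∈ A₁, ∀ g ∈ A₀, T (f * g) = T (g * f)) ∧
  (∀ f ∈ A₁, ∀ g ∈ A₁, T (f * g) = - T (g * f))

private lemma klein_fwd {A : Type*} [Ring A] [Algebra ℂ A] (A₀ A₁ : Submodule ℂ A)
    (h00 : ∀ f ∈ A₀, ∀ g ∈ A₀, f * g ∈ A₀)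
    (h01 : ∀ f ∈ A₀, ∀ g ∈ A₁, f * g ∈ A₁)
    (h10 : ∀ f ∈ A₁, ∀ g ∈ A₀, f * g ∈ A₁)
    (K : A) (hK0 : K ∈ A₀)
    (hKeven : ∀ f ∈ A₀, K * f = f * K)
    (hKodd : ∀ f ∈ A₁, K * f = - (f * K))
    (tr : A →ₗ[ℂ] ℂ) (htr : IsEvenTrace A₀ A₁ tr) :
    IsEvenSupertrace A₀ A₁ (tr ∘ₗ LinearMap.mulLeft ℂ K) := by
  obtain ⟨h1, h2, _, _, h5⟩ := htr
  refine ⟨fun x hx => ?_, fun f hf g hg => ?_, fun f hf g hg => ?_,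
    fun f hf g hg => ?_, fun f hf g hg => ?_⟩
  · exact h1 _ (h01 K hK0 x hx)
  · simp only [LinearMap.comp_apply, LinearMap.mulLeft_apply]
    calc tr (K * (f * g)) = tr ((K * f) * g) := by rw [mul_assoc]
      _ = tr (g * (K * f)) := h2 _ (h00 K hK0 f hf) g hg
      _ = tr ((g * K) * f) := by rw [mul_assoc]
      _ = tr (K * (g * f)) := by rw [← hKeven g hg, mul_assoc]
  · simp only [LinearMap.comp_apply, LinearMap.mulLeft_apply]
    rw [h1 _ (h01 K hK0 _ (h01 f hf g hg)), h1 _ (h01 K hK0 _ (h10 g hg f hf))]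
  · simp only [LinearMap.comp_apply, LinearMap.mulLeft_apply]
    rw [h1 _ (h01 K hK0 _ (h10 f hf g hg)), h1 _ (h01 K hK0 _ (h01 g hg f hf))]
  · simp only [LinearMap.comp_apply, LinearMap.mulLeft_apply]
    calc tr (K * (f * g)) = tr ((K * f) * g) := by rw [mul_assoc]
      _ = tr (g * (K * f)) := h5 _ (h01 K hK0 f hf) g hg
      _ = tr ((g * K) * f) := by rw [mul_assoc]
      _ = - tr (K * (g * f)) := by
          have : g * K = -(K * g) := by rw [hKodd g hg, neg_neg]
          rw [this, neg_mul, map_neg, mul_assoc]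

private lemma klein_bwd {A : Type*} [Ring A] [Algebra ℂ A] (A₀ A₁ : Submodule ℂ A)
    (h00 : ∀ f ∈ A₀, ∀ g ∈ A₀, f * g ∈ A₀)
    (h01 : ∀ f ∈ A₀, ∀ g ∈ A₁, f * g ∈ A₁)
    (h10 : ∀ f ∈ A₁, ∀ g ∈ A₀, f * g ∈ A₁)
    (K : A) (hK0 : K ∈ A₀)
    (hKeven : ∀ f ∈ A₀, K * f = f * K)
    (hKodd : ∀ f ∈ A₁, K * f = - (f * K))
    (str : A →ₗ[ℂ] ℂ) (hstr : IsEvenSupertrace A₀ A₁ str) :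
    IsEvenTrace A₀ A₁ (str ∘ₗ LinearMap.mulLeft ℂ K) := by
  obtain ⟨h1, h2, _, _, h5⟩ := hstr
  refine ⟨fun x hx => ?_, fun f hf g hg => ?_, fun f hf g hg => ?_,
    fun f hf g hg => ?_, fun f hf g hg => ?_⟩
  · exact h1 _ (h01 K hK0 x hx)
  · simp only [LinearMap.comp_apply, LinearMap.mulLeft_apply]
    calc str (K * (f * g)) = str ((K * f) * g) := by rw [mul_assoc]
      _ = str (g * (K * f)) := h2 _ (h00 K hK0 f hf) g hg
      _ = str ((g * K) * f) := by rw [mul_assoc]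
      _ = str (K * (g * f)) := by rw [← hKeven g hg, mul_assoc]
  · simp only [LinearMap.comp_apply, LinearMap.mulLeft_apply]
    rw [h1 _ (h01 K hK0 _ (h01 f hf g hg)), h1 _ (h01 K hK0 _ (h10 g hg f hf))]
  · simp only [LinearMap.comp_apply, LinearMap.mulLeft_apply]
    rw [h1 _ (h01 K hK0 _ (h10 f hf g hg)), h1 _ (h01 K hK0 _ (h01 g hg f hf))]
  · simp only [LinearMap.comp_apply, LinearMap.mulLeft_apply]
    calc str (K * (f * g)) = str ((K * f) * g) := by rw [mul_assoc]
      _ = - str (g * (K * f)) := h5 _ (h01 K hK0 f hf) g hg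
      _ = - str ((g * K) * f) := by rw [mul_assoc]
      _ = str (K * (g * f)) := by
          have : g * K = -(K * g) := by rw [hKodd g hg, neg_neg]
          rw [this, neg_mul, map_neg, mul_assoc, neg_neg]

/-- If `K` is a Klein operator on an associative superalgebra `A` (`K` even, `K² = 1`,
`K f = (-1)^{π(f)} f K`), then `tr ↦ (f ↦ tr (K f))` is a bijection between the set of
even traces and the set of even supertraces on `A`. -/
theorem klein_operator_trace_supertrace_bijection
    (hcompl : IsCompl A₀ A₁)
    (h00 : ∀ f ∈ A₀, ∀ g ∈ A₀, f * g ∈ A₀)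
    (h01 : ∀ f ∈ A₀, ∀ g ∈ A₁, f * g ∈ A₁)
    (h10 : ∀ f ∈ A₁, ∀ g ∈ A₀, f * g ∈ A₁)
    (h11 : ∀ f ∈ A₁, ∀ g ∈ A₁, f * g ∈ A₀)
    (K : A) (hK0 : K ∈ A₀) (hK2 : K * K = 1)
    (hKeven : ∀ f ∈ A₀, K * f = f * K)
    (hKodd : ∀ f ∈ A₁, K * f = - (f * K)) :
    (∀ tr : A →ₗ[ℂ] ℂ,
      IsEvenTrace A₀ A₁ tr ↔ IsEvenSupertrace A₀ A₁ (tr ∘ₗ LinearMap.mulLeft ℂ K)) ∧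
    Set.BijOn (fun tr : A →ₗ[ℂ] ℂ => tr ∘ₗ LinearMap.mulLeft ℂ K)
      {tr | IsEvenTrace A₀ A₁ tr} {str | IsEvenSupertrace A₀ A₁ str} := by
  have hinv : ∀ T : A →ₗ[ℂ] ℂ,
      (T ∘ₗ LinearMap.mulLeft ℂ K) ∘ₗ LinearMap.mulLeft ℂ K = T := by
    intro T
    ext x
    simp only [LinearMap.comp_apply, LinearMap.mulLeft_apply]
    rw [← mul_assoc, hK2, one_mul]
  have hiff : ∀ tr : A →ₗ[ℂ] ℂ,
      IsEvenTrace A₀ A₁ tr ↔ IsEvenSupertrace A₀ A₁ (tr ∘ₗ LinearMap.mulLeft ℂ K) := by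
    intro tr
    constructor
    · exact klein_fwd A₀ A₁ h00 h01 h10 K hK0 hKeven hKodd tr
    · intro h
      have := klein_bwd A₀ A₁ h00 h01 h10 K hK0 hKeven hKodd _ h
      rwa [hinv tr] at this
  refine ⟨hiff, ⟨fun tr htr => (hiff tr).mp htr, fun t1 _ t2 _ h => ?_,
    fun str hstr => ?_⟩⟩
  · have := congrArg (fun T : A →ₗ[ℂ] ℂ => T ∘ₗ LinearMap.mulLeft ℂ K) h
    simpa only [hinv] using this
  · refine ⟨str ∘ₗ LinearMap.mulLeft ℂ K, ?_, hinv str⟩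
    exact klein_bwd A₀ A₁ h00 h01 h10 K hK0 hKeven hKodd str hstr

end Klein
end
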